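/- arXiv:2009.07439 — 2 statements merged into one kernel-verified Lean document; each statement's English description precedes it below -/
import Mathlib

section
/- Consider a deep linear network with scalar output d_y = 1 in which every layer may be sparse: each weight matrix is constrained to a fixed support mask, and the network is assumed effective (every input neuron, hidden neuron, and the output neuron lies on some directed path of unmasked connections from an input to the output). Then the loss L(θ) = (1/2)‖Ṽ_L ⋯ Ṽ_1 W̃ X − Y‖_F² over the masked parameter space has no spurious strict minima: every strict local minimizer θ_0 (i.e., L(θ_0) < L(θ) for all masked θ ≠ θ_0 in some neighborhood) satisfies L(θ_0) = inf L. -/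
open scoped BigOperators Matrix

/-- Squared Frobenius norm of a real matrix. -/
noncomputable def frobSq {m n : Type*} [Fintype m] [Fintype n] (M : Matrix m n ℝ) : ℝ :=
  ∑ i, ∑ j, (M i j) ^ 2

/-- Product `A_L ⋯ A_0` of the layers, as a matrix `Fin (w L) × Fin (w 0)`. -/
noncomputable def layerProd (w : ℕ → ℕ) :
    (L : ℕ) → ((j : Fin L) → Fin (w (j + 1)) → Fin (w j) → ℝ) →
      Matrix (Fin (w L)) (Fin (w 0)) ℝ
  | 0, _ => 1
  | (L + 1), V =>
      (Matrix.of (V (Fin.last L)) : Matrix (Fin (w (L + 1))) (Fin (w L)) ℝ) *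
        layerProd w L (fun j => V ⟨j.1, Nat.lt_succ_of_lt j.2⟩)

lemma sum_sq_expand {ι κ : Type*} [Fintype ι] [Fintype κ] (m n : ι → κ → ℝ) (l : ℝ) :
    ∑ i, ∑ j, (m i j + l * n i j)^2
      = (∑ i, ∑ j, (m i j)^2) + (∑ i, ∑ j, m i j * n i j) * (2*l)
        + (∑ i, ∑ j, (n i j)^2) * l^2 := by
  rw [Finset.sum_mul, Finset.sum_mul, ← Finset.sum_add_distrib, ← Finset.sum_add_distrib]
  refine Finset.sum_congr rfl fun i _ => ?_
  rw [Finset.sum_mul, Finset.sum_mul, ← Finset.sum_add_distrib, ← Finset.sum_add_distrib]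
  refine Finset.sum_congr rfl fun j _ => ?_
  ring

lemma quad_pos_aux (a b δ : ℝ) (hδ : 0 < δ)
    (h : ∀ l : ℝ, l ≠ 0 → |l| ≤ δ → 0 < b * l + a * l^2) : 0 ≤ b + a := by
  have h1 := h δ (ne_of_gt hδ) (by rw [abs_of_pos hδ])
  have h2 := h (-δ) (by linarith) (by rw [abs_neg, abs_of_pos hδ])
  have ha : 0 < a := by nlinarith
  have hb : 0 ≤ b := by
    by_contra hb
    push_neg at hb
    have hq : 0 < -b / (2 * a) := div_pos (by linarith) (by linarith)
    set l := min δ (-b / (2 * a)) with hldef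
    have hl0 : 0 < l := lt_min hδ hq
    have h3 := h l (ne_of_gt hl0) (by rw [abs_of_pos hl0]; exact min_le_left _ _)
    have h4 : l ≤ -b / (2 * a) := min_le_right _ _
    have h5 : l * (2 * a) ≤ -b := (le_div_iff₀ (by linarith)).mp h4
    nlinarith
  linarith

lemma layerProd_eq_zero (w : ℕ → ℕ) :
    ∀ (L : ℕ) (V : (j : Fin L) → Fin (w (j + 1)) → Fin (w j) → ℝ) (j : Fin L),
      V j = 0 → layerProd w L V = 0 := by
  intro L
  induction L with
  | zero => intro _ j; exact j.elim0
  | succ L ih =>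
    intro V j hj
    by_cases hjl : j = Fin.last L
    · subst hjl
      simp [layerProd, hj]
    · obtain ⟨jv, hjv⟩ := j
      have hlt : jv < L := lt_of_le_of_ne (Nat.lt_succ_iff.mp hjv) (fun e => hjl (Fin.ext e))
      have : layerProd w L (fun u : Fin L => V ⟨u.1, Nat.lt_succ_of_lt u.2⟩) = 0 :=
        ih _ ⟨jv, hlt⟩ hj
      simp [layerProd, this]
open scoped BigOperators Matrix

lemma layerProd_update_smul (w : ℕ → ℕ) :
    ∀ (L : ℕ) (V : (j : Fin L) → Fin (w (j + 1)) → Fin (w j) → ℝ) (t : Fin L) (c : ℝ),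
      layerProd w L (Function.update V t (c • V t)) = c • layerProd w L V := by
  intro L
  induction L with
  | zero => intro _ t; exact t.elim0
  | succ L ih =>
    intro V t c
    by_cases htl : t = Fin.last L
    · subst htl
      have h1 : Function.update V (Fin.last L) (c • V (Fin.last L)) (Fin.last L)
          = c • V (Fin.last L) := Function.update_self _ _ _
      have h2 : (fun j : Fin L => Function.update V (Fin.last L) (c • V (Fin.last L))
            ⟨j.1, Nat.lt_succ_of_lt j.2⟩)
          = fun j : Fin L => V ⟨j.1, Nat.lt_succ_of_lt j.2⟩ := by
        funext j
        exact Function.update_of_ne (by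
          intro e
          have evv : (j : ℕ) = L := congrArg Fin.val e
          exact absurd evv j.2.ne) _ _
      simp only [layerProd]
      rw [h1, h2]
      exact Matrix.smul_mul c _ _
    · obtain ⟨tv, htv⟩ := t
      have hlt : tv < L := lt_of_le_of_ne (Nat.lt_succ_iff.mp htv) (fun e => htl (Fin.ext e))
      have h1 : Function.update V ⟨tv, htv⟩ (c • V ⟨tv, htv⟩) (Fin.last L) = V (Fin.last L) :=
        Function.update_of_ne (by
          intro e
          have evv : L = tv := congrArg Fin.val e
          omega) _ _
      have h2 : (fun j : Fin L => Function.update V ⟨tv, htv⟩ (c • V ⟨tv, htv⟩)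
            ⟨j.1, Nat.lt_succ_of_lt j.2⟩)
          = Function.update (fun j : Fin L => V ⟨j.1, Nat.lt_succ_of_lt j.2⟩) ⟨tv, hlt⟩
              (c • V ⟨tv, htv⟩) := by
        funext j
        by_cases hj : j = (⟨tv, hlt⟩ : Fin L)
        · subst hj
          have e1 : Function.update V ⟨tv, htv⟩ (c • V ⟨tv, htv⟩) ⟨tv, Nat.lt_succ_of_lt hlt⟩
              = c • V ⟨tv, htv⟩ := Function.update_self _ _ _
          rw [e1, Function.update_self]
        · have hne : (⟨j.1, Nat.lt_succ_of_lt j.2⟩ : Fin (L+1)) ≠ ⟨tv, htv⟩ := by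
            intro e
            have evv : (j : ℕ) = tv := congrArg Fin.val e
            exact hj (Fin.ext evv)
          rw [Function.update_of_ne hne, Function.update_of_ne hj]
      simp only [layerProd]
      rw [h1, h2]
      have e2 : (c • V ⟨tv, htv⟩ : Fin (w (tv+1)) → Fin (w tv) → ℝ)
          = c • (fun j : Fin L => V ⟨j.1, Nat.lt_succ_of_lt j.2⟩) ⟨tv, hlt⟩ := rfl
      rw [e2, ih _ ⟨tv, hlt⟩ c]
      exact Matrix.mul_smul _ c _

open Filter Topology

lemma tendsto_update_add {ι : Type*} [DecidableEq ι] [Fintype ι] {B : ι → Type*}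
    [∀ i, NormedAddCommGroup (B i)] [∀ i, NormedSpace ℝ (B i)]
    (f : ∀ i, B i) (t : ι) (E : B t) :
    Tendsto (fun s : ℝ => Function.update f t (f t + s • E)) (𝓝 0) (𝓝 f) := by
  have hc : Continuous fun s : ℝ => Function.update f t (f t + s • E) :=
    continuous_const.update t (continuous_const.add (continuous_id.smul continuous_const))
  have h0 : Function.update f t (f t + (0:ℝ) • E) = f := by
    rw [zero_smul, add_zero, Function.update_eq_self]
  simpa [h0] using hc.tendsto 0

lemma tendsto_two_scale {ι : Type*} [DecidableEq ι] [Fintype ι] {B : ι → Type*}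
    [∀ i, NormedAddCommGroup (B i)] [∀ i, NormedSpace ℝ (B i)]
    (f : ∀ i, B i) (t0 t1 : ι) :
    Tendsto (fun s : ℝ => Function.update (Function.update f t0 ((1+s) • f t0)) t1
      ((1+s)⁻¹ • f t1)) (𝓝 0) (𝓝 (Function.update f t1 (f t1))) := by
  have hcA : ContinuousAt (fun s : ℝ => ((1+s) • f t0, (1+s)⁻¹ • f t1)) 0 := by
    apply ContinuousAt.prodMk
    · exact ((continuous_const.add continuous_id).smul continuous_const).continuousAt
    · exact (((continuous_const.add continuous_id).continuousAt).inv₀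
        (by norm_num)).smul continuousAt_const
  have hcB : Continuous (fun p : B t0 × B t1 =>
      Function.update (Function.update f t0 p.1) t1 p.2) :=
    (continuous_const.update t0 continuous_fst).update t1 continuous_snd
  have hcomp := (hcB.continuousAt.comp hcA :
    ContinuousAt ((fun p : B t0 × B t1 => Function.update (Function.update f t0 p.1) t1 p.2)
      ∘ (fun s : ℝ => ((1+s) • f t0, (1+s)⁻¹ • f t1))) 0)
  have he : ((fun p : B t0 × B t1 => Function.update (Function.update f t0 p.1) t1 p.2)
      ∘ (fun s : ℝ => ((1+s) • f t0, (1+s)⁻¹ • f t1))) 0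
      = Function.update f t1 (f t1) := by
    simp [Function.comp, Function.update_eq_self]
  have := hcomp.tendsto
  rw [he] at this
  exact this

/-- A deep linear network with scalar output (`w (Ld+1) = 1`) in which every
layer is constrained to a fixed support mask, assumed effective (every neuron lies on a
directed path of unmasked connections from an input to the output), has no spurious strict
minima over the masked parameter space: every strict local minimizer among masked parameters
attains the infimum of the loss over masked parameters. -/
theorem deep_sparse_linear_scalar_no_spurious_strict_minima
    (Ld n : ℕ) (w : ℕ → ℕ) (hout : w (Ld + 1) = 1)
    (X : Matrix (Fin (w 0)) (Fin n) ℝ) (Y : Matrix (Fin (w (Ld + 1))) (Fin n) ℝ)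
    (mask : (t : Fin (Ld + 1)) → Fin (w (t + 1)) → Fin (w t) → Prop)
    -- effectiveness: every neuron of every layer lies on a fully-unmasked input-output path
    (heff : ∀ (t : Fin (Ld + 2)) (i : Fin (w t)),
      ∃ ν : (u : ℕ) → Fin (w u), ν t.1 = i ∧ ∀ u : Fin (Ld + 1), mask u (ν (u.1 + 1)) (ν u.1))
    (L : ((t : Fin (Ld + 1)) → Fin (w (t + 1)) → Fin (w t) → ℝ) → ℝ)
    (hL : ∀ θ, L θ = (1 / 2) * frobSq (layerProd w (Ld + 1) θ * X - Y))
    -- the masked parameter set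
    (Masked : ((t : Fin (Ld + 1)) → Fin (w (t + 1)) → Fin (w t) → ℝ) → Prop)
    (hMasked : ∀ θ, Masked θ ↔ ∀ t i k, ¬ mask t i k → θ t i k = 0) :
    ∀ θ0, Masked θ0 →
      (∃ ε > (0 : ℝ), ∀ θ, Masked θ → θ ≠ θ0 → ‖θ - θ0‖ ≤ ε → L θ0 < L θ) →
      L θ0 = ⨅ θ : {θ // Masked θ}, L θ.1 := by
  intro θ0 hθ0 hmin
  obtain ⟨ε, hε, hstrict⟩ := hmin
  have glob : ∀ θ, Masked θ → L θ0 ≤ L θ := by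
    cases Ld with
    | zero =>
      intro θ hθ
      by_cases hne : θ = θ0
      · subst hne; exact le_refl _
      -- the direction
      set d := θ - θ0 with hd
      have hd0 : d ≠ 0 := sub_ne_zero.mpr hne
      have hdn : 0 < ‖d‖ := norm_pos_iff.mpr hd0
      -- single layer product is linear
      have hpr : ∀ V : (t : Fin (0 + 1)) → Fin (w (t + 1)) → Fin (w t) → ℝ,
          layerProd w (0 + 1) V = Matrix.of (V (Fin.last 0)) := by
        intro V
        simp [layerProd]
      -- entries along the segment
      set Mm : Matrix (Fin (w (0+1))) (Fin n) ℝ := layerProd w (0 + 1) θ0 * X - Y with hMm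
      set Nn : Matrix (Fin (w (0+1))) (Fin n) ℝ := layerProd w (0 + 1) d * X with hNn
      have hlin : ∀ l : ℝ, layerProd w (0 + 1) (θ0 + l • d) * X - Y = Mm + l • Nn := by
        intro l
        have hsum : layerProd w (0 + 1) (θ0 + l • d)
            = layerProd w (0 + 1) θ0 + l • layerProd w (0 + 1) d := by
          rw [hpr, hpr, hpr]; rfl
        rw [hMm, hNn, hsum, Matrix.add_mul, Matrix.smul_mul]
        abel
      set b : ℝ := (1/2) * (∑ i, ∑ j, Mm i j * Nn i j) * 2 with hb
      set a : ℝ := (1/2) * (∑ i, ∑ j, (Nn i j)^2) with ha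
      have key : ∀ l : ℝ, L (θ0 + l • d) = L θ0 + b * l + a * l ^ 2 := by
        intro l
        rw [hL, hL, hlin, ← hMm]
        have e1 : frobSq (Mm + l • Nn)
            = (∑ i, ∑ j, (Mm i j)^2) + (∑ i, ∑ j, Mm i j * Nn i j) * (2*l)
              + (∑ i, ∑ j, (Nn i j)^2) * l^2 := by
          rw [← sum_sq_expand Mm Nn l]
          refine Finset.sum_congr rfl fun i _ => Finset.sum_congr rfl fun j _ => ?_
          simp [Matrix.add_apply, Matrix.smul_apply, smul_eq_mul]
        rw [e1, hb, ha, show frobSq Mm = ∑ i, ∑ j, (Mm i j)^2 from rfl]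
        ring
      -- masked along the segment
      have hmaskseg : ∀ l : ℝ, Masked (θ0 + l • d) := by
        intro l
        rw [hMasked]
        intro t i k hm
        have h1 : θ0 t i k = 0 := (hMasked θ0).mp hθ0 t i k hm
        have h2 : θ t i k = 0 := (hMasked θ).mp hθ t i k hm
        simp [hd, h1, h2]
      have hposseg : ∀ l : ℝ, l ≠ 0 → |l| ≤ ε / ‖d‖ → 0 < b * l + a * l ^ 2 := by
        intro l hl0 hlδ
        have hne' : θ0 + l • d ≠ θ0 := by
          intro e
          have : l • d = 0 := by
            have := congrArg (fun x => x - θ0) e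
            simpa using this
          rcases smul_eq_zero.mp this with h | h
          · exact hl0 h
          · exact hd0 h
        have hnorm : ‖(θ0 + l • d) - θ0‖ ≤ ε := by
          rw [add_sub_cancel_left, norm_smul, Real.norm_eq_abs]
          calc |l| * ‖d‖ ≤ (ε / ‖d‖) * ‖d‖ := by
                exact mul_le_mul_of_nonneg_right hlδ (le_of_lt hdn)
            _ = ε := div_mul_cancel₀ ε (ne_of_gt hdn)
        have := hstrict _ (hmaskseg l) hne' hnorm
        rw [key] at this
        linarith
      have hba : 0 ≤ b + a := quad_pos_aux a b (ε / ‖d‖) (div_pos hε hdn) hposseg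
      have hone : θ0 + (1:ℝ) • d = θ := by
        rw [hd, one_smul]
        abel
      have : L θ = L θ0 + b * 1 + a * 1 ^ 2 := by rw [← key 1, hone]
      rw [this]
      linarith
    | succ m =>
      intro θ hθ
      exfalso
      have hθ0' := (hMasked θ0).mp hθ0
      have h01 : (0 : Fin (m + 2)) ≠ 1 := by simp [Fin.ext_iff]
      set u1 : Fin (m + 2) := 1 with hu1
      by_cases hz : θ0 0 = 0
      · -- layer 0 vanishes: perturb layer 1, the product stays 0
        have hw : 0 < w (m + 1 + 1) := by rw [hout]; norm_num
        obtain ⟨ν, -, hν⟩ := heff (Fin.last (m + 2)) ⟨0, hw⟩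
        have hm1 := hν u1
        set i1 := ν (↑u1 + 1) with hi1
        set k1 := ν ↑u1 with hk1
        set E : Fin (w (↑u1 + 1)) → Fin (w ↑u1) → ℝ :=
          fun i k => if i = i1 ∧ k = k1 then 1 else 0 with hE
        set θs : ℝ → ((t : Fin (m + 1 + 1)) → Fin (w (t + 1)) → Fin (w t) → ℝ) :=
          fun s => Function.update θ0 u1 (θ0 u1 + s • E) with hθs
        have hlayer0 : ∀ s, θs s 0 = 0 := by
          intro s
          rw [hθs]
          simp only
          rw [Function.update_of_ne h01]
          exact hz
        have hLeq : ∀ s, L (θs s) = L θ0 := by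
          intro s
          rw [hL, hL, layerProd_eq_zero w _ (θs s) 0 (hlayer0 s),
            layerProd_eq_zero w _ θ0 0 hz]
        have hMs : ∀ s, Masked (θs s) := by
          intro s
          rw [hMasked]
          intro t i k hm
          by_cases ht : t = u1
          · subst ht
            rw [hθs]
            simp only
            rw [Function.update_self]
            have hz1 : θ0 u1 i k = 0 := hθ0' u1 i k hm
            have hz2 : E i k = 0 := by
              rw [hE]
              simp only
              split_ifs with hc
              · exact absurd (by rw [hc.1, hc.2]; exact hm1) hm
              · rfl
            simp [hz1, hz2]
          · rw [hθs]
            simp only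
            rw [Function.update_of_ne ht]
            exact hθ0' t i k hm
        have hNe : ∀ s : ℝ, s ≠ 0 → θs s ≠ θ0 := by
          intro s hs e
          have h1 : θs s u1 = θ0 u1 := congrFun e u1
          rw [hθs] at h1
          simp only at h1
          rw [Function.update_self] at h1
          have h2 := congrFun (congrFun h1 i1) k1
          simp [hE] at h2
          exact hs h2
        have htd : Tendsto θs (𝓝 0) (𝓝 θ0) := tendsto_update_add θ0 u1 E
        have hev : ∀ᶠ s in 𝓝 (0:ℝ), dist (θs s) θ0 < ε := (Metric.tendsto_nhds.mp htd) ε hε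
        have hev' : ∀ᶠ s in 𝓝[≠] (0:ℝ), dist (θs s) θ0 < ε := hev.filter_mono nhdsWithin_le_nhds
        obtain ⟨s, hsd, hs0⟩ := (hev'.and eventually_mem_nhdsWithin).exists
        have := hstrict (θs s) (hMs s) (hNe s hs0) (le_of_lt (by rw [← dist_eq_norm]; exact hsd))
        rw [hLeq s] at this
        exact lt_irrefl _ this
      · -- layer 0 nonzero: rescale layers 0 and 1
        set θs : ℝ → ((t : Fin (m + 1 + 1)) → Fin (w (t + 1)) → Fin (w t) → ℝ) :=
          fun s => Function.update (Function.update θ0 0 ((1+s) • θ0 0)) u1 ((1+s)⁻¹ • θ0 u1)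
            with hθs
        have hVu1 : ∀ s : ℝ, (Function.update θ0 0 ((1+s) • θ0 0)) u1 = θ0 u1 :=
          fun s => Function.update_of_ne (Ne.symm h01) _ _
        have hprod : ∀ s : ℝ, (1 + s) ≠ 0 →
            layerProd w (m + 1 + 1) (θs s) = layerProd w (m + 1 + 1) θ0 := by
          intro s hs
          have e1 : θs s = Function.update (Function.update θ0 0 ((1+s) • θ0 0)) u1
              ((1+s)⁻¹ • (Function.update θ0 0 ((1+s) • θ0 0)) u1) := by
            rw [hθs, hVu1]
          rw [e1, layerProd_update_smul, layerProd_update_smul, smul_smul,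
            inv_mul_cancel₀ hs, one_smul]
        have hLeq : ∀ s : ℝ, (1 + s) ≠ 0 → L (θs s) = L θ0 := by
          intro s hs
          rw [hL, hL, hprod s hs]
        have hMs : ∀ s, Masked (θs s) := by
          intro s
          rw [hMasked]
          intro t i k hm
          have hz1 : θ0 t i k = 0 := hθ0' t i k hm
          by_cases ht : t = u1
          · subst ht
            rw [hθs]
            simp only
            rw [Function.update_self]
            simp [hz1]
          · rw [hθs]
            simp only
            rw [Function.update_of_ne ht]
            by_cases ht0 : t = 0
            · subst ht0
              rw [Function.update_self]
              show (1+s) * θ0 0 i k = 0; rw [hz1, mul_zero]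
            · rw [Function.update_of_ne ht0]
              exact hz1
        have hNe : ∀ s : ℝ, s ≠ 0 → θs s ≠ θ0 := by
          intro s hs e
          have h1 : θs s 0 = θ0 0 := congrFun e 0
          rw [hθs] at h1
          simp only at h1
          rw [Function.update_of_ne h01, Function.update_self] at h1
          have h2 : s • θ0 0 = 0 := by
            have : (1+s) • θ0 0 - (1:ℝ) • θ0 0 = 0 := by rw [one_smul, h1, sub_self]
            rw [← sub_smul] at this
            simpa using this
          rcases smul_eq_zero.mp h2 with h | h
          · exact hs h
          · exact hz h
        have htd : Tendsto θs (𝓝 0) (𝓝 θ0) := by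
          have := tendsto_two_scale θ0 0 u1
          rw [Function.update_eq_self] at this
          exact this
        have hev : ∀ᶠ s in 𝓝 (0:ℝ), dist (θs s) θ0 < ε := (Metric.tendsto_nhds.mp htd) ε hε
        have hev2 : ∀ᶠ s in 𝓝 (0:ℝ), (1:ℝ) + s ≠ 0 := by
          have : Tendsto (fun s : ℝ => 1 + s) (𝓝 0) (𝓝 (1:ℝ)) := by
            simpa using (continuous_add_left (1:ℝ)).tendsto (0:ℝ)
          exact this.eventually_ne (by norm_num)
        have hev' := (hev.and hev2).filter_mono (nhdsWithin_le_nhds (s := {(0:ℝ)}ᶜ))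
        obtain ⟨s, ⟨hsd, hs1⟩, hs0⟩ := (hev'.and eventually_mem_nhdsWithin).exists
        have := hstrict (θs s) (hMs s) (hNe s hs0) (le_of_lt (by rw [← dist_eq_norm]; exact hsd))
        rw [hLeq s hs1] at this
        exact lt_irrefl _ this
  haveI : Nonempty {θ // Masked θ} := ⟨⟨θ0, hθ0⟩⟩
  refine le_antisymm ?_ ?_
  · exact le_ciInf (fun p => glob p.1 p.2)
  · have hbdd : BddBelow (Set.range fun p : {θ // Masked θ} => L p.1) :=
      ⟨L θ0, by rintro x ⟨p, rfl⟩; exact glob p.1 p.2⟩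
    exact ciInf_le hbdd ⟨θ0, hθ0⟩
end

section
/- Let σ : ℝ → ℝ be continuous with σ(0) = 0 and σ not identically zero, and let y_1, y_2, y_3, y_4 ∈ ℝ satisfy y_3 > 4 y_4 > 4 y_1 > 0 and y_2 > 0. Define L : ℝ^8 → ℝ by L(w_1,…,w_8) = ‖M − Y‖_F², where M = [[w_1 σ(w_5), w_1 σ(w_6), 0], [w_2 σ(w_5), w_2 σ(w_6) + w_3 σ(w_7), w_3 σ(w_8)], [0, w_4 σ(w_7), w_4 σ(w_8)]] and Y = [[y_1, y_1, 0], [y_2, y_2 + y_3, 0], [0, 0, y_4]]. Then L has a spurious valley: there exists a path-connected component T of the sublevel set {θ ∈ ℝ^8 : L(θ) ≤ y_4²} with inf_{θ∈T} L(θ) = y_4², while inf_{θ∈ℝ^8} L(θ) ≤ y_1² (y_3/(y_2+y_3))² < y_4². -/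
open scoped BigOperators Matrix

set_option maxHeartbeats 2000000 in
lemma ss_barrier (y₁ y₂ y₃ y₄ : ℝ) (h1 : 0 < y₁) (h14 : y₁ < y₄) (h34 : 4*y₄ < y₃)
    (h2 : 0 < y₂) (w1 w2 w3 w4 a b c d : ℝ)
    (hQ : (w1*a-y₁)^2 + (w1*b-y₁)^2 + (w2*a-y₂)^2 + (w2*b+w3*c-(y₂+y₃))^2
        + (w3*d)^2 + (w4*c)^2 + (w4*d-y₄)^2 ≤ y₄^2) :
    w4*d = 0 ∨ y₁^2*(y₃-y₄)^2 / (8*(2*y₁+2*y₂+y₃+7*y₄)^2*y₄) < w4*d := by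
  have hy4 : 0 < y₄ := h1.trans h14
  have hKpos : 0 < 2*y₁+2*y₂+y₃+7*y₄ := by linarith
  set K := 2*y₁+2*y₂+y₃+7*y₄ with hKdef
  have h34' : 0 < y₃ - y₄ := by linarith
  set δ := y₁^2*(y₃-y₄)^2 / (8*K^2*y₄) with hδdef
  clear_value K δ
  have hδpos : 0 < δ := by rw [hδdef]; positivity
  have ht0 : 0 ≤ w4*d := by
    by_contra hneg
    push_neg at hneg
    linarith [sq_nonneg (w1*a-y₁), sq_nonneg (w1*b-y₁), sq_nonneg (w2*a-y₂),
      sq_nonneg (w2*b+w3*c-(y₂+y₃)), sq_nonneg (w3*d), sq_nonneg (w4*c),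
      mul_pos (neg_pos.mpr hneg) (show (0:ℝ) < 2*y₄ - w4*d by linarith)]
  rcases ht0.eq_or_lt with h0 | htpos
  · exact Or.inl h0.symm
  right
  by_contra hcon
  push_neg at hcon
  by_cases hp : y₄ ≤ abs (w3*c)
  · have habs : abs (w3*d) * abs (w4*c) = abs (w3*c) * (w4*d) := by
      rw [← abs_mul, show w3*d*(w4*c) = w3*c*(w4*d) by ring, abs_mul, abs_of_pos htpos]
    linarith [sq_nonneg (abs (w3*d) - abs (w4*c)), sq_abs (w3*d), sq_abs (w4*c),
      sq_nonneg (w1*a-y₁), sq_nonneg (w1*b-y₁), sq_nonneg (w2*a-y₂),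
      sq_nonneg (w2*b+w3*c-(y₂+y₃)),
      mul_le_mul_of_nonneg_right hp htpos.le, mul_pos htpos htpos, habs]
  · push_neg at hp
    obtain ⟨hp1, hp2⟩ := abs_lt.mp hp
    set e1 := w1*a-y₁ with he1
    set e2 := w1*b-y₁ with he2
    set e3 := w2*a-y₂ with he3
    set e4 := w2*b+w3*c-(y₂+y₃) with he4
    clear_value e1 e2 e3 e4
    have hb1 : e1^2 ≤ y₄^2 := by
      linarith [sq_nonneg e2, sq_nonneg e3, sq_nonneg e4,
        sq_nonneg (w3*d), sq_nonneg (w4*c), sq_nonneg (w4*d-y₄)]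
    have hb2 : e2^2 ≤ y₄^2 := by
      linarith [sq_nonneg e1, sq_nonneg e3, sq_nonneg e4,
        sq_nonneg (w3*d), sq_nonneg (w4*c), sq_nonneg (w4*d-y₄)]
    have hb3 : e3^2 ≤ y₄^2 := by
      linarith [sq_nonneg e1, sq_nonneg e2, sq_nonneg e4,
        sq_nonneg (w3*d), sq_nonneg (w4*c), sq_nonneg (w4*d-y₄)]
    have hb4 : e4^2 ≤ y₄^2 := by
      linarith [sq_nonneg e1, sq_nonneg e2, sq_nonneg e3,
        sq_nonneg (w3*d), sq_nonneg (w4*c), sq_nonneg (w4*d-y₄)]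
    have habs_of_sq : ∀ x : ℝ, x^2 ≤ y₄^2 → abs x ≤ y₄ := fun x hx =>
      abs_le_of_sq_le_sq hx hy4.le
    have a1 := habs_of_sq _ hb1
    have a2 := habs_of_sq _ hb2
    have a3 := habs_of_sq _ hb3
    have a4 := habs_of_sq _ hb4
    have A1 := abs_nonneg e1
    have A2 := abs_nonneg e2
    have A3 := abs_nonneg e3
    have A4 := abs_nonneg e4
    -- coefficient bounds
    have hw1a : abs (w1*a) ≤ y₁ + y₄ := by
      calc abs (w1*a) = abs (e1 + y₁) := by rw [he1]; ring_nf
        _ ≤ abs e1 + abs y₁ := abs_add_le _ _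
        _ ≤ y₄ + y₁ := by rw [abs_of_pos h1]; linarith
        _ = y₁ + y₄ := by ring
    have hw1b : abs (w1*b) ≤ y₁ + y₄ := by
      calc abs (w1*b) = abs (e2 + y₁) := by rw [he2]; ring_nf
        _ ≤ abs e2 + abs y₁ := abs_add_le _ _
        _ ≤ y₄ + y₁ := by rw [abs_of_pos h1]; linarith
        _ = y₁ + y₄ := by ring
    have hw2a : abs (w2*a) ≤ y₂ + y₄ := by
      calc abs (w2*a) = abs (e3 + y₂) := by rw [he3]; ring_nf
        _ ≤ abs e3 + abs y₂ := abs_add_le _ _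
        _ ≤ y₄ + y₂ := by rw [abs_of_pos h2]; linarith
        _ = y₂ + y₄ := by ring
    have hw3c : abs (w3*c) ≤ y₄ := hp.le
    have hw2b : abs (w2*b) ≤ y₂ + y₃ + 2*y₄ := by
      calc abs (w2*b) = abs ((e4 + -(w3*c)) + (y₂+y₃)) := by rw [he4]; ring_nf
        _ ≤ abs (e4 + -(w3*c)) + abs (y₂+y₃) := abs_add_le _ _
        _ ≤ (abs e4 + abs (-(w3*c))) + abs (y₂+y₃) := by gcongr; exact abs_add_le _ _
        _ ≤ (y₄ + y₄) + (y₂+y₃) := by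
              rw [abs_neg, abs_of_pos (show (0:ℝ) < y₂+y₃ by linarith)]
              gcongr
        _ = y₂ + y₃ + 2*y₄ := by ring
    -- determinant identity
    have hid : y₁*(y₃ - w3*c)
        = -((w1*a)*e4) - (w2*b)*e1 + e1*e4 + (w1*b)*e3 + (w2*a)*e2 - e2*e3 := by
      rw [he1, he2, he3, he4]; ring
    have habs_mul_le : ∀ u v Cu Cv : ℝ, abs u ≤ Cu → abs v ≤ Cv → u*v ≤ Cu*Cv := by
      intro u v Cu Cv hu hv
      calc u*v ≤ abs (u*v) := le_abs_self _
        _ = abs u * abs v := abs_mul _ _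
        _ ≤ Cu*Cv := mul_le_mul hu hv (abs_nonneg _) ((abs_nonneg u).trans hu)
    have t1 : -((w1*a)*e4) ≤ (y₁+y₄) * abs e4 := by
      have := habs_mul_le (-(w1*a)) e4 (y₁+y₄) (abs e4) (by rwa [abs_neg]) le_rfl
      linarith
    have t2 : -((w2*b)*e1) ≤ (y₂+y₃+2*y₄) * abs e1 := by
      have := habs_mul_le (-(w2*b)) e1 (y₂+y₃+2*y₄) (abs e1) (by rwa [abs_neg]) le_rfl
      linarith
    have t3 : e1*e4 ≤ y₄ * abs e4 := habs_mul_le _ _ _ _ a1 le_rfl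
    have t4 : (w1*b)*e3 ≤ (y₁+y₄) * abs e3 := habs_mul_le _ _ _ _ hw1b le_rfl
    have t5 : (w2*a)*e2 ≤ (y₂+y₄) * abs e2 := habs_mul_le _ _ _ _ hw2a le_rfl
    have t6 : -(e2*e3) ≤ y₄ * abs e3 := by
      have := habs_mul_le (-e2) e3 y₄ (abs e3) (by rwa [abs_neg]) le_rfl
      linarith
    have hc1 : (y₂+y₃+2*y₄) * abs e1 ≤ K * abs e1 :=
      mul_le_mul_of_nonneg_right (by rw [hKdef]; linarith) A1
    have hc2 : (y₂+y₄) * abs e2 ≤ (K - y₄) * abs e2 :=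
      mul_le_mul_of_nonneg_right (by rw [hKdef]; linarith) A2
    have hc3 : (y₁+y₄) * abs e3 + y₄ * abs e3 ≤ K * abs e3 := by
      have h' : (y₁+y₄) + y₄ ≤ K := by rw [hKdef]; linarith
      have := mul_le_mul_of_nonneg_right h' A3
      linarith [this]
    have hc4 : (y₁+y₄) * abs e4 + y₄ * abs e4 ≤ K * abs e4 := by
      have h' : (y₁+y₄) + y₄ ≤ K := by rw [hKdef]; linarith
      have := mul_le_mul_of_nonneg_right h' A4
      linarith [this]
    have hmono : y₁*(y₃-y₄) ≤ y₁*(y₃ - w3*c) := by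
      have := mul_le_mul_of_nonneg_left hp2.le h1.le
      linarith
    have hbound : y₁*(y₃-y₄) ≤ K * (abs e1 + abs e2 + abs e3 + abs e4) := by
      have hye2 : y₄ * abs e2 ≥ 0 := by positivity
      linarith [hid, t1, t2, t3, t4, t5, t6, hc1, hc2, hc3, hc4, hmono, hye2, mul_le_mul_of_nonneg_right (le_refl K) A2]
    -- final contradiction
    have hsq : (y₁*(y₃-y₄))^2 ≤ (K*(abs e1 + abs e2 + abs e3 + abs e4))^2 := by
      have h0 : 0 ≤ y₁*(y₃-y₄) := by positivity
      exact pow_le_pow_left₀ h0 hbound 2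
    have hCS : (abs e1 + abs e2 + abs e3 + abs e4)^2 ≤ 4*(e1^2+e2^2+e3^2+e4^2) := by
      linarith [sq_nonneg (abs e1-abs e2), sq_nonneg (abs e1-abs e3),
        sq_nonneg (abs e1-abs e4), sq_nonneg (abs e2-abs e3), sq_nonneg (abs e2-abs e4),
        sq_nonneg (abs e3-abs e4), sq_abs e1, sq_abs e2, sq_abs e3, sq_abs e4]
    have hsum : e1^2+e2^2+e3^2+e4^2 ≤ 2*(w4*d)*y₄ - (w4*d)^2 := by
      linarith [sq_nonneg (w3*d), sq_nonneg (w4*c)]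
    have hdelta : 8*K^2*y₄*δ = y₁^2*(y₃-y₄)^2 := by
      rw [hδdef]; field_simp
    have hP1 : (K*(abs e1 + abs e2 + abs e3 + abs e4))^2
        ≤ K^2 * (4*(e1^2+e2^2+e3^2+e4^2)) := by
      have := mul_le_mul_of_nonneg_left hCS (sq_nonneg K)
      linarith [this]
    have hP2 : K^2 * (4*(e1^2+e2^2+e3^2+e4^2)) ≤ K^2 * (4*(2*(w4*d)*y₄ - (w4*d)^2)) := by
      apply mul_le_mul_of_nonneg_left _ (sq_nonneg K)
      linarith
    have hP3 : 8*K^2*y₄*(w4*d) ≤ 8*K^2*y₄*δ :=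
      mul_le_mul_of_nonneg_left hcon (by positivity)
    linarith [hsq, hP1, hP2, hP3, hdelta,
      mul_pos (mul_pos (mul_pos (show (0:ℝ)<4 by norm_num) (pow_pos hKpos 2)) htpos) htpos]

set_option maxHeartbeats 2000000 in
/-- For a continuous activation `σ` with `σ(0) = 0` and `σ ≢ 0`, and
targets `y₃ > 4y₄ > 4y₁ > 0`, `y₂ > 0`, the sparse-sparse two-layer network loss
`L(w₁,…,w₈) = ‖M − Y‖_F²` has a spurious valley: some path-connected component of the
sublevel set `{L ≤ y₄²}` has infimum `y₄²`, while `inf L ≤ y₁² (y₃/(y₂+y₃))² < y₄²`. -/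
theorem ss_nonlinear_spurious_valley
    (σ : ℝ → ℝ) (hσ : Continuous σ) (hσ0 : σ 0 = 0) (hσne : ∃ z : ℝ, σ z ≠ 0)
    (y₁ y₂ y₃ y₄ : ℝ)
    (h34 : y₃ > 4 * y₄) (h41 : 4 * y₄ > 4 * y₁) (h1 : 4 * y₁ > 0) (h2 : y₂ > 0)
    (L : (Fin 8 → ℝ) → ℝ)
    (hL : ∀ θ : Fin 8 → ℝ, L θ = frobSq
      (!![θ 0 * σ (θ 4), θ 0 * σ (θ 5), 0;
          θ 1 * σ (θ 4), θ 1 * σ (θ 5) + θ 2 * σ (θ 6), θ 2 * σ (θ 7);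
          0, θ 3 * σ (θ 6), θ 3 * σ (θ 7)] -
       !![y₁, y₁, 0; y₂, y₂ + y₃, 0; 0, 0, y₄])) :
    (∃ θ0 : Fin 8 → ℝ, L θ0 ≤ y₄ ^ 2 ∧
      sInf (L '' pathComponentIn {θ | L θ ≤ y₄ ^ 2} θ0) = y₄ ^ 2) ∧
    (⨅ θ, L θ) ≤ y₁ ^ 2 * (y₃ / (y₂ + y₃)) ^ 2 ∧
    y₁ ^ 2 * (y₃ / (y₂ + y₃)) ^ 2 < y₄ ^ 2 := by
  obtain ⟨z, hz⟩ := hσne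
  have hy1 : 0 < y₁ := by linarith
  have hy14 : y₁ < y₄ := by linarith
  have hy4 : 0 < y₄ := by linarith
  have hy34 : 4*y₄ < y₃ := by linarith
  have hy23 : 0 < y₂ + y₃ := by linarith
  set s := σ z with hs
  -- expanded form of the loss
  have hLexp : ∀ θ : Fin 8 → ℝ, L θ
      = (θ 0 * σ (θ 4) - y₁)^2 + (θ 0 * σ (θ 5) - y₁)^2 + (θ 1 * σ (θ 4) - y₂)^2
      + (θ 1 * σ (θ 5) + θ 2 * σ (θ 6) - (y₂+y₃))^2 + (θ 2 * σ (θ 7))^2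
      + (θ 3 * σ (θ 6))^2 + (θ 3 * σ (θ 7) - y₄)^2 := by
    intro θ
    rw [hL θ]
    simp [frobSq, Fin.sum_univ_three, Matrix.sub_apply]
    ring
  -- the bad point θ0
  set θ0 : Fin 8 → ℝ := ![y₁/s, y₂/s, y₃/s, 0, z, z, z, 0] with hθ0def
  have hθ00 : θ0 0 = y₁/s := rfl
  have hLθ0 : L θ0 = y₄ ^ 2 := by
    rw [hLexp θ0]
    show (y₁/s * σ z - y₁)^2 + (y₁/s * σ z - y₁)^2 + (y₂/s * σ z - y₂)^2
      + (y₂/s * σ z + y₃/s * σ z - (y₂+y₃))^2 + (y₃/s * σ 0)^2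
      + (0 * σ z)^2 + (0 * σ 0 - y₄)^2 = y₄ ^ 2
    rw [← hs, hσ0]
    field_simp
    ring
  -- the near-optimal point θstar
  have hratio0 : 0 < y₂/(y₂+y₃) := div_pos h2 hy23
  have hratio1 : y₂/(y₂+y₃) < 1 := (div_lt_one hy23).mpr (by linarith)
  have hmem : s * (y₂/(y₂+y₃)) ∈ Set.uIcc (σ 0) (σ z) := by
    rw [hσ0, ← hs, Set.mem_uIcc]
    rcases (Ne.lt_or_gt hz) with hneg | hpos
    · right
      constructor
      · nlinarith
      · nlinarith
    · left
      constructor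
      · positivity
      · nlinarith
  obtain ⟨v, _, hv⟩ := intermediate_value_uIcc (Continuous.continuousOn hσ) hmem
  set θstar : Fin 8 → ℝ := ![y₁/s, (y₂+y₃)/s, 0, y₄/s, v, z, 0, z] with hθstardef
  have hLθstar : L θstar = y₁ ^ 2 * (y₃ / (y₂ + y₃)) ^ 2 := by
    rw [hLexp θstar]
    show (y₁/s * σ v - y₁)^2 + (y₁/s * σ z - y₁)^2 + ((y₂+y₃)/s * σ v - y₂)^2
      + ((y₂+y₃)/s * σ z + 0 * σ 0 - (y₂+y₃))^2 + (0 * σ z)^2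
      + (y₄/s * σ 0)^2 + (y₄/s * σ z - y₄)^2 = y₁ ^ 2 * (y₃ / (y₂ + y₃)) ^ 2
    rw [hv, hσ0, ← hs]
    field_simp
    ring
  -- lower bound 0 for L
  have hLnonneg : ∀ θ : Fin 8 → ℝ, 0 ≤ L θ := by
    intro θ
    rw [hLexp θ]
    positivity
  have hbdd : BddBelow (Set.range L) := by
    refine ⟨0, ?_⟩
    rintro x ⟨θ, rfl⟩
    exact hLnonneg θ
  -- the barrier value
  set δ := y₁^2*(y₃-y₄)^2 / (8*(2*y₁+2*y₂+y₃+7*y₄)^2*y₄) with hδdef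
  have hδpos : 0 < δ := by
    rw [hδdef]
    have : 0 < y₃ - y₄ := by linarith
    have : 0 < 2*y₁+2*y₂+y₃+7*y₄ := by linarith
    positivity
  have hbar : ∀ θ : Fin 8 → ℝ, L θ ≤ y₄ ^ 2 →
      θ 3 * σ (θ 7) = 0 ∨ δ < θ 3 * σ (θ 7) := by
    intro θ hθ
    rw [hδdef]
    refine ss_barrier y₁ y₂ y₃ y₄ hy1 hy14 hy34 h2
      (θ 0) (θ 1) (θ 2) (θ 3) (σ (θ 4)) (σ (θ 5)) (σ (θ 6)) (σ (θ 7)) ?_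
    rw [hLexp θ] at hθ
    exact hθ
  set S : Set (Fin 8 → ℝ) := {θ | L θ ≤ y₄ ^ 2} with hSdef
  have hθ0S : θ0 ∈ S := le_of_eq hLθ0
  -- every point in the path component has loss exactly y₄²
  have hcomp : ∀ θ ∈ pathComponentIn S θ0, L θ = y₄ ^ 2 := by
    intro θ hθ
    obtain ⟨γ, hγ⟩ := (hθ : JoinedIn S θ0 θ)
    have hθS : L θ ≤ y₄ ^ 2 := by
      have := hγ 1
      rwa [γ.target] at this
    refine le_antisymm hθS ?_
    by_contra hlt
    push_neg at hlt
    rcases hbar θ hθS with h0 | hgt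
    · -- θ 3 * σ (θ 7) = 0 forces L θ ≥ y₄²
      have := hLexp θ
      rw [h0] at this
      linarith [sq_nonneg (θ 0 * σ (θ 4) - y₁), sq_nonneg (θ 0 * σ (θ 5) - y₁),
        sq_nonneg (θ 1 * σ (θ 4) - y₂), sq_nonneg (θ 1 * σ (θ 5) + θ 2 * σ (θ 6) - (y₂+y₃)),
        sq_nonneg (θ 2 * σ (θ 7)), sq_nonneg (θ 3 * σ (θ 6))]
    · -- IVT along the path hits the forbidden zone
      set g : ℝ → ℝ := fun u => (γ.extend u) 3 * σ ((γ.extend u) 7) with hg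
      have hgc : Continuous g := by
        apply Continuous.mul
        · exact (continuous_apply 3).comp γ.continuous_extend
        · exact hσ.comp ((continuous_apply 7).comp γ.continuous_extend)
      have hg0 : g 0 = 0 := by
        rw [hg]
        simp only [Path.extend_zero]
        show θ0 3 * σ (θ0 7) = 0
        show (0:ℝ) * σ (θ0 7) = 0
        ring
      have hg1 : g 1 = θ 3 * σ (θ 7) := by
        rw [hg]
        simp only [Path.extend_one]
      have hδmem : δ ∈ Set.Icc (g 0) (g 1) := by
        rw [hg0, hg1]
        exact ⟨hδpos.le, hgt.le⟩
      obtain ⟨u, hu, hgu⟩ := intermediate_value_Icc zero_le_one hgc.continuousOn hδmem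
      have huS : γ.extend u ∈ S := by
        rw [Path.extend_apply γ hu]
        exact hγ _
      have hgu' : γ.extend u 3 * σ (γ.extend u 7) = δ := hgu
      rcases hbar (γ.extend u) huS with h0' | hgt'
      · rw [h0'] at hgu'
        exact hδpos.ne' hgu'.symm
      · rw [hgu'] at hgt'
        exact lt_irrefl _ hgt'
  have himage : L '' pathComponentIn S θ0 = {y₄ ^ 2} := by
    apply Set.eq_singleton_iff_nonempty_unique_mem.mpr
    constructor
    · exact ⟨L θ0, ⟨θ0, mem_pathComponentIn_self hθ0S, rfl⟩⟩
    · rintro x ⟨θ, hθ, rfl⟩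
      exact hcomp θ hθ
  refine ⟨⟨θ0, le_of_eq hLθ0, ?_⟩, ?_, ?_⟩
  · rw [himage]
    exact csInf_singleton _
  · calc (⨅ θ, L θ) ≤ L θstar := ciInf_le hbdd θstar
      _ = y₁ ^ 2 * (y₃ / (y₂ + y₃)) ^ 2 := hLθstar
  · have hr : y₃ / (y₂ + y₃) < 1 := (div_lt_one hy23).mpr (by linarith)
    have hrpos : 0 < y₃ / (y₂ + y₃) := div_pos (by linarith) hy23
    have h5 : (y₃/(y₂+y₃))^2 < 1 := by nlinarith
    have h6 : y₁^2 < y₄^2 := by nlinarith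
    have h7 := mul_lt_mul_of_pos_left h5 (pow_pos hy1 2)
    linarith [h7, h6]
end
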